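/- Let f₁,…,f_k be homeomorphisms of the n-sphere Sⁿ (n ≥ 1) generating an IFS which is backward minimal and which contains a 'north–south' homeomorphism ϕ in the generated semigroup, with attracting fixed point p and repelling fixed point q (convergence ϕ^ℓ → p uniform on complements of neighborhoods of q). Let ℙ be the Bernoulli measure on Σ = {1,…,k}^ℕ with strictly positive weights. Then the IFS is proximal in a strong way: for every x, y ∈ Sⁿ, for ℙ-almost every ω ∈ Σ, liminf_{i→∞} d(f^i_ω(x), f^i_ω(y)) = 0. -/

import Mathlib

open MeasureTheory Metric
open scoped ENNReal

/-- Apply the maps of an IFS along a finite word: `f_{w_n} ∘ ⋯ ∘ f_{w_1}`. -/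
def applyWord {X : Type*} {k : ℕ} (f : Fin k → X → X) (w : List (Fin k)) (x : X) : X :=
  w.foldl (fun y i => f i y) x

/-- Apply the inverses of the IFS generators along a finite word. -/
def applyInvWord {X : Type*} [TopologicalSpace X] {k : ℕ} (f : Fin k → X ≃ₜ X)
    (w : List (Fin k)) (x : X) : X :=
  w.foldl (fun y i => (f i).symm y) x

/-- The fiberwise iterate `f^n_ω(x) = f_{ω_n} ∘ ⋯ ∘ f_{ω_1}(x)` (0-indexed `ω`). -/
def fIter {X : Type*} {k : ℕ} (f : Fin k → X → X) (ω : ℕ → Fin k) (x : X) : ℕ → X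
  | 0 => x
  | n + 1 => f (ω n) (fIter f ω x n)

/-!
Backward minimality at the repeller `q` lets a word `u` move any two points `a, b` off `q`
(otherwise every backward image of `q` would be `a` or `b`), after which iterates of `ϕ` bring
both close to the attractor `p`. By compactness, for each `ε` one bound `N` on the length of
such ε-contracting words works for all pairs. Along a Bernoulli sequence, the block of
length `N` starting at time `M + jN` spells the contracting word of the current pair with
probability at least `(∏ i, pw i) ^ N`, whatever happened before, so almost surely this
happens for some `j`, after any time `M`.
-/

open Filter Set Topology

section Words

variable {X : Type*} {k : ℕ}

theorem applyWord_cons (g : Fin k → X → X) (i : Fin k) (w : List (Fin k)) (x : X) :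
    applyWord g (i :: w) x = applyWord g w (g i x) := rfl

theorem applyWord_append (g : Fin k → X → X) (u v : List (Fin k)) (x : X) :
    applyWord g (u ++ v) x = applyWord g v (applyWord g u x) := by
  simp [applyWord, List.foldl_append]

theorem iterate_applyWord (g : Fin k → X → X) (w : List (Fin k)) (m : ℕ) :
    (applyWord g w)^[m] = applyWord g (List.replicate m w).flatten := by
  induction m with
  | zero => rfl
  | succ m ih =>
    funext x
    rw [Function.iterate_succ_apply', ih, List.replicate_succ', List.flatten_append,
      List.flatten_singleton, applyWord_append]

theorem continuous_applyWord [TopologicalSpace X] {g : Fin k → X → X}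
    (hg : ∀ i, Continuous (g i)) (w : List (Fin k)) : Continuous (applyWord g w) := by
  induction w with
  | nil => exact continuous_id
  | cons i w ih => exact ih.comp (hg i)

theorem fIter_dependsOn (g : Fin k → X → X) (x : X) (t : ℕ) :
    DependsOn (fun ω => fIter g ω x t) (Iio t) := by
  intro ω ω' h
  induction t with
  | zero => rfl
  | succ t ih =>
    simp only [fIter]
    rw [h t (Nat.lt_succ_self t)]
    exact congrArg (g (ω' t)) (ih fun i hi => h i (Nat.lt_succ_of_lt hi))

def OccursAt (ω : ℕ → Fin k) (t : ℕ) (w : List (Fin k)) : Prop :=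
  ∀ i : Fin w.length, ω (t + i) = w.get i

theorem fIter_add_length_of_occursAt (g : Fin k → X → X) {ω : ℕ → Fin k} {t : ℕ}
    {w : List (Fin k)} (h : OccursAt ω t w) (x : X) :
    fIter g ω x (t + w.length) = applyWord g w (fIter g ω x t) := by
  induction w generalizing t with
  | nil => rfl
  | cons a w ih =>
    have ha : ω t = a := by simpa using h 0
    have hw : OccursAt ω (t + 1) w := fun i => by
      simpa [add_assoc, add_comm 1] using h i.succ
    rw [List.length_cons, ← add_assoc, Nat.add_right_comm, ih hw, applyWord_cons]
    simp only [fIter, ha]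

theorem OccursAt.dependsOn {m N : ℕ} {W : (ℕ → Fin k) → List (Fin k)}
    (hW : DependsOn W (Iio m)) (hN : ∀ ω, (W ω).length ≤ N) :
    DependsOn (fun ω => OccursAt ω m (W ω)) (Iio (m + N)) := by
  intro ω ω' h
  have hWω : W ω = W ω' := hW fun i hi => h i (lt_of_lt_of_le hi (Nat.le_add_right m N))
  change OccursAt ω m (W ω) = OccursAt ω' m (W ω')
  rw [hWω]
  refine propext (forall_congr' fun i => ?_)
  rw [h (m + i) (by have := hN ω'; simp only [mem_Iio]; omega)]

end Words

section Homeomorphisms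

variable {X : Type*} [TopologicalSpace X] {k : ℕ} (f : Fin k → X ≃ₜ X)

theorem applyWord_reverse_applyInvWord (w : List (Fin k)) (x : X) :
    applyWord (fun i => ⇑(f i)) w.reverse (applyInvWord f w x) = x := by
  induction w generalizing x with
  | nil => rfl
  | cons i w ih =>
    rw [List.reverse_cons, applyWord_append]
    exact (congrArg (f i) (ih _)).trans ((f i).apply_symm_apply x)

theorem injective_applyWord (w : List (Fin k)) :
    (applyWord (fun i => ⇑(f i)) w).Injective := by
  induction w with
  | nil => exact Function.injective_id
  | cons i w ih => exact ih.comp (f i).injective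

theorem exists_applyWord_ne_ne [T1Space X] {q : X}
    (hq : Dense (range fun w => applyInvWord f w q)) (hX : ∀ a b : X, ∃ z, z ≠ a ∧ z ≠ b)
    (a b : X) :
    ∃ u, applyWord (fun i => ⇑(f i)) u a ≠ q ∧ applyWord (fun i => ⇑(f i)) u b ≠ q := by
  by_contra! hab
  have hsub : range (fun w => applyInvWord f w q) ⊆ {a, b} := by
    rintro _ ⟨w, rfl⟩
    have hq' := applyWord_reverse_applyInvWord f w q
    by_cases ha : applyWord (fun i => ⇑(f i)) w.reverse a = q
    · exact Or.inl (injective_applyWord f _ (hq'.trans ha.symm))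
    · exact Or.inr (injective_applyWord f _ (hq'.trans (hab _ ha).symm))
  obtain ⟨z, hza, hzb⟩ := hX a b
  have hz : z ∈ ({a, b} : Set X) :=
    closure_minimal hsub (toFinite _).isClosed (hq.closure_eq ▸ mem_univ z)
  rcases hz with h | h
  exacts [hza h, hzb h]

end Homeomorphisms

section Contraction

variable {X : Type*} {k : ℕ}

theorem exists_dist_applyWord_lt [MetricSpace X] (f : Fin k → X ≃ₜ X) {p q : X}
    (hq : Dense (range fun w => applyInvWord f w q)) (hX : ∀ a b : X, ∃ z, z ≠ a ∧ z ≠ b)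
    {w₀ : List (Fin k)}
    (hns : ∀ z ≠ q,
      Tendsto (fun m => (applyWord (fun i => ⇑(f i)) w₀)^[m] z) atTop (𝓝 p))
    {ε : ℝ} (hε : 0 < ε) (a b : X) :
    ∃ w, dist (applyWord (fun i => ⇑(f i)) w a) (applyWord (fun i => ⇑(f i)) w b) < ε := by
  obtain ⟨u, hua, hub⟩ := exists_applyWord_ne_ne f hq hX a b
  obtain ⟨m, hm⟩ :=
    (((hns _ hua).dist (hns _ hub)).eventually (gt_mem_nhds (by rwa [dist_self]))).exists
  refine ⟨u ++ (List.replicate m w₀).flatten, ?_⟩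
  simpa only [applyWord_append, iterate_applyWord] using hm

theorem exists_uniform_length_dist_applyWord_lt [PseudoMetricSpace X] [CompactSpace X]
    {g : Fin k → X → X} (hg : ∀ i, Continuous (g i)) {ε : ℝ}
    (h : ∀ a b, ∃ w, dist (applyWord g w a) (applyWord g w b) < ε) :
    ∃ N, ∀ a b, ∃ w : List (Fin k),
      w.length ≤ N ∧ dist (applyWord g w a) (applyWord g w b) < ε := by
  let U : List (Fin k) → Set (X × X) := fun w =>
    {z | dist (applyWord g w z.1) (applyWord g w z.2) < ε}
  have hU : ∀ w, IsOpen (U w) := fun w =>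
    isOpen_lt (((continuous_applyWord hg w).comp continuous_fst).dist
      ((continuous_applyWord hg w).comp continuous_snd)) continuous_const
  obtain ⟨t, ht⟩ := isCompact_univ.elim_finite_subcover U hU fun z _ =>
    mem_iUnion.2 (h z.1 z.2)
  refine ⟨t.sup List.length, fun a b => ?_⟩
  obtain ⟨w, hwt, hw⟩ := mem_iUnion₂.1 (ht (mem_univ (a, b)))
  exact ⟨w, Finset.le_sup hwt, hw⟩

end Contraction

theorem sphere_exists_ne_ne {E : Type*} [NormedAddCommGroup E] [NormedSpace ℝ E]
    (hE : 1 < Module.rank ℝ E) (a b : sphere (0 : E) 1) : ∃ z, z ≠ a ∧ z ≠ b := by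
  classical
  have : ConnectedSpace (sphere (0 : E) 1) :=
    isConnected_iff_connectedSpace.1 (isConnected_sphere hE 0 zero_le_one)
  have : Nontrivial (sphere (0 : E) 1) := ⟨a, -a, ne_neg_of_mem_unit_sphere ℝ a⟩
  have := PreconnectedSpace.infinite (X := sphere (0 : E) 1)
  obtain ⟨z, hz⟩ := Infinite.exists_notMem_finset ({a, b} : Finset _)
  exact ⟨z, by simp_all⟩

section Bernoulli

variable {k : ℕ}

def prefixCylinder {m : ℕ} (u : Fin m → Fin k) : Set (ℕ → Fin k) :=
  {ω | ∀ i : Fin m, ω i = u i}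

def IsBernoulli (μ : Measure (ℕ → Fin k)) (pw : Fin k → ℝ≥0∞) : Prop :=
  ∀ (m : ℕ) (u : Fin m → Fin k), μ (prefixCylinder u) = ∏ i, pw (u i)

theorem prefixCylinder_eq_preimage {m : ℕ} (u : Fin m → Fin k) :
    prefixCylinder u = (fun ω (i : Fin m) => ω i) ⁻¹' {u} := by
  ext ω
  simp [prefixCylinder, funext_iff]

theorem measurableSet_prefixCylinder {m : ℕ} (u : Fin m → Fin k) :
    MeasurableSet (prefixCylinder u) := by
  rw [prefixCylinder_eq_preimage]
  exact measurable_pi_lambda _ (fun i => measurable_pi_apply _) (measurableSet_singleton u)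

theorem eq_of_mem_prefixCylinder {m : ℕ} {u : Fin m → Fin k} {ω ω' : ℕ → Fin k}
    (hω : ω ∈ prefixCylinder u) (hω' : ω' ∈ prefixCylinder u) :
    ∀ i ∈ Iio m, ω i = ω' i :=
  fun i hi => (hω ⟨i, hi⟩).trans (hω' ⟨i, hi⟩).symm

theorem prefixCylinder_inter_occursAt {m : ℕ} (u : Fin m → Fin k) (w : List (Fin k)) :
    prefixCylinder u ∩ {ω | OccursAt ω m w} = prefixCylinder (Fin.append u w.get) := by
  ext ω
  simp [prefixCylinder, OccursAt, Fin.forall_fin_add]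

theorem measure_eq_sum_prefixCylinder_inter (μ : Measure (ℕ → Fin k)) (m : ℕ)
    (B : Set (ℕ → Fin k)) : μ B = ∑ u : Fin m → Fin k, μ (prefixCylinder u ∩ B) := by
  have h := sum_measure_preimage_singleton (μ := μ.restrict B) Finset.univ
    (f := fun ω (i : Fin m) => ω i) fun u _ => prefixCylinder_eq_preimage u ▸
      measurableSet_prefixCylinder u
  simp only [Finset.coe_univ, preimage_univ, Measure.restrict_apply_univ] at h
  rw [← h]
  refine Finset.sum_congr rfl fun u _ => ?_
  rw [← prefixCylinder_eq_preimage, Measure.restrict_apply (measurableSet_prefixCylinder u)]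

theorem pow_prod_le_prod_get {pw : Fin k → ℝ≥0∞} (hpw : ∀ i, pw i ≤ 1) {N : ℕ}
    {w : List (Fin k)} (hw : w.length ≤ N) : (∏ i, pw i) ^ N ≤ ∏ j, pw (w.get j) :=
  calc (∏ i, pw i) ^ N ≤ (∏ i, pw i) ^ w.length :=
        pow_le_pow_right_of_le_one' (Finset.prod_le_one' fun i _ => hpw i) hw
    _ = ∏ _j : Fin w.length, ∏ i, pw i := by simp
    _ ≤ ∏ j, pw (w.get j) := Finset.prod_le_prod' fun j _ => by
        simpa using Finset.prod_le_prod_of_subset_of_le_one' (Finset.subset_univ {w.get j})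
          fun i _ _ => hpw i

variable {μ : Measure (ℕ → Fin k)} {pw : Fin k → ℝ≥0∞}

theorem IsBernoulli.le_one [IsProbabilityMeasure μ] (hμ : IsBernoulli μ pw) (i : Fin k) :
    pw i ≤ 1 := by
  simpa using (hμ 1 fun _ => i).symm.trans_le prob_le_one

theorem IsBernoulli.measure_prefixCylinder_inter_occursAt (hμ : IsBernoulli μ pw) {m : ℕ}
    (u : Fin m → Fin k) (w : List (Fin k)) :
    μ (prefixCylinder u ∩ {ω | OccursAt ω m w}) =
      μ (prefixCylinder u) * ∏ j, pw (w.get j) := by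
  rw [prefixCylinder_inter_occursAt, hμ, hμ, Fin.prod_univ_add]
  simp

theorem IsBernoulli.measure_prefixCylinder_inter_not_occursAt_le [IsProbabilityMeasure μ]
    (hμ : IsBernoulli μ pw) {m N : ℕ} (u : Fin m → Fin k) {w : List (Fin k)}
    (hw : w.length ≤ N) :
    μ (prefixCylinder u ∩ {ω | ¬ OccursAt ω m w}) ≤
      (1 - (∏ i, pw i) ^ N) * μ (prefixCylinder u) := by
  have hdiff : prefixCylinder u ∩ {ω | ¬ OccursAt ω m w} =
      prefixCylinder u \ (prefixCylinder u ∩ {ω | OccursAt ω m w}) := by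
    rw [sdiff_self_inter]
    rfl
  have hmeas : MeasurableSet (prefixCylinder u ∩ {ω | OccursAt ω m w}) := by
    rw [prefixCylinder_inter_occursAt]
    exact measurableSet_prefixCylinder _
  calc μ (prefixCylinder u ∩ {ω | ¬ OccursAt ω m w})
      = μ (prefixCylinder u) - μ (prefixCylinder u) * ∏ j, pw (w.get j) := by
        rw [hdiff, measure_sdiff inter_subset_left hmeas.nullMeasurableSet (measure_ne_top _ _),
          hμ.measure_prefixCylinder_inter_occursAt]
    _ ≤ μ (prefixCylinder u) - μ (prefixCylinder u) * (∏ i, pw i) ^ N :=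
        by gcongr; exact pow_prod_le_prod_get hμ.le_one hw
    _ = (1 - (∏ i, pw i) ^ N) * μ (prefixCylinder u) := by
        rw [ENNReal.sub_mul fun _ _ => measure_ne_top _ _, one_mul, mul_comm]

theorem IsBernoulli.measure_inter_not_occursAt_le [IsProbabilityMeasure μ]
    (hμ : IsBernoulli μ pw) {m N : ℕ} {A : Set (ℕ → Fin k)}
    (hA : DependsOn (· ∈ A) (Iio m))
    {W : (ℕ → Fin k) → List (Fin k)} (hW : DependsOn W (Iio m))
    (hWN : ∀ ω, (W ω).length ≤ N) :
    μ (A ∩ {ω | ¬ OccursAt ω m (W ω)}) ≤ (1 - (∏ i, pw i) ^ N) * μ A := by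
  rw [measure_eq_sum_prefixCylinder_inter μ m, measure_eq_sum_prefixCylinder_inter μ m A,
    Finset.mul_sum]
  refine Finset.sum_le_sum fun u _ => ?_
  rcases (prefixCylinder u ∩ A).eq_empty_or_nonempty with hempty | ⟨ω₀, hω₀u, hω₀A⟩
  · rw [hempty, ← inter_assoc, hempty, empty_inter]
    simp
  -- on the cylinder through `ω₀`, membership in `A` and the word `W` are those of `ω₀`
  have hAu : prefixCylinder u ⊆ A := fun ω hω =>
    (eq_iff_iff.1 (hA (eq_of_mem_prefixCylinder hω₀u hω))).1 hω₀A
  have hWu : prefixCylinder u ∩ (A ∩ {ω | ¬ OccursAt ω m (W ω)}) =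
      prefixCylinder u ∩ {ω | ¬ OccursAt ω m (W ω₀)} := by
    ext ω
    simp only [mem_inter_iff, mem_ofPred_eq]
    constructor
    · rintro ⟨hω, -, hocc⟩
      exact ⟨hω, hW (eq_of_mem_prefixCylinder hω₀u hω) ▸ hocc⟩
    · rintro ⟨hω, hocc⟩
      exact ⟨hω, hAu hω, hW (eq_of_mem_prefixCylinder hω₀u hω) ▸ hocc⟩
  rw [hWu, inter_eq_left.2 hAu]
  exact hμ.measure_prefixCylinder_inter_not_occursAt_le u (hWN ω₀)

theorem IsBernoulli.measure_forall_not_occursAt_eq_zero [IsProbabilityMeasure μ]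
    (hμ : IsBernoulli μ pw) (hpos : ∀ i, 0 < pw i) {N : ℕ} {s : ℕ → ℕ}
    (hs : ∀ j, s j + N ≤ s (j + 1))
    {W : ℕ → (ℕ → Fin k) → List (Fin k)} (hW : ∀ j, DependsOn (W j) (Iio (s j)))
    (hWN : ∀ j ω, (W j ω).length ≤ N) :
    μ {ω | ∀ j, ¬ OccursAt ω (s j) (W j ω)} = 0 := by
  set ρ := (∏ i, pw i) ^ N
  have hρ : ρ ≠ 0 := pow_ne_zero _ (Finset.prod_ne_zero_iff.2 fun i _ => (hpos i).ne')
  let D : ℕ → Set (ℕ → Fin k) := fun J => {ω | ∀ j < J, ¬ OccursAt ω (s j) (W j ω)}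
  have hD_succ (J : ℕ) : D (J + 1) = D J ∩ {ω | ¬ OccursAt ω (s J) (W J ω)} := by
    ext ω
    exact Nat.forall_lt_succ_right
  have hD_dependsOn (J : ℕ) : DependsOn (· ∈ D J) (Iio (s J)) := by
    induction J with
    | zero => exact fun _ _ _ => by simp [D]
    | succ J ih =>
      intro ω ω' h
      have hD := ih fun i hi => h i (lt_of_lt_of_le hi ((Nat.le_add_right _ N).trans (hs J)))
      have hocc := OccursAt.dependsOn (hW J) (hWN J) fun i hi => h i (lt_of_lt_of_le hi (hs J))
      simp only [hD_succ, mem_inter_iff, mem_ofPred_eq] at hD hocc ⊢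
      rw [hD, hocc]
  have hD_le (J : ℕ) : μ (D J) ≤ (1 - ρ) ^ J := by
    induction J with
    | zero => simpa using prob_le_one
    | succ J ih =>
      rw [hD_succ, pow_succ']
      exact (hμ.measure_inter_not_occursAt_le (hD_dependsOn J) (hW J) (hWN J)).trans
        (by gcongr)
  refine le_antisymm (ge_of_tendsto' (ENNReal.tendsto_pow_atTop_nhds_zero_of_lt_one
    (ENNReal.sub_lt_self ENNReal.one_ne_top one_ne_zero hρ)) fun J => ?_) bot_le
  refine (measure_mono fun ω hω => ?_).trans (hD_le J)
  exact fun j _ => hω j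

theorem IsBernoulli.ae_frequently_dist_fIter_lt [IsProbabilityMeasure μ]
    (hμ : IsBernoulli μ pw) (hpos : ∀ i, 0 < pw i)
    {X : Type*} [PseudoMetricSpace X] {g : Fin k → X → X} {ε : ℝ} {N : ℕ}
    (hg : ∀ a b, ∃ w : List (Fin k),
      w.length ≤ N ∧ dist (applyWord g w a) (applyWord g w b) < ε)
    (x y : X) :
    ∀ᵐ ω ∂μ, ∃ᶠ t in atTop, dist (fIter g ω x t) (fIter g ω y t) < ε := by
  choose σ hσN hσ using hg
  simp only [ae_iff, not_frequently, not_lt, eventually_atTop, ofPred_exists]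
  refine measure_iUnion_null fun M => measure_mono_null ?_
    (hμ.measure_forall_not_occursAt_eq_zero hpos (s := fun j => M + j * N)
      (W := fun j ω => σ (fIter g ω x (M + j * N)) (fIter g ω y (M + j * N)))
      (fun j => by rw [add_mul, one_mul, add_assoc])
      (fun j _ _ h => congrArg₂ σ (fIter_dependsOn g x _ h) (fIter_dependsOn g y _ h))
      fun j ω => hσN _ _)
  intro ω hω j hocc
  have hclose := hσ (fIter g ω x (M + j * N)) (fIter g ω y (M + j * N))
  rw [← fIter_add_length_of_occursAt g hocc x,
    ← fIter_add_length_of_occursAt g hocc y] at hclose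
  exact (hω _ (by omega)).not_gt hclose

end Bernoulli

theorem liminf_eq_zero_of_frequently_lt {ι : Type*} {l : Filter ι} [l.NeBot] {u : ι → ℝ}
    (hu₀ : ∀ i, 0 ≤ u i) (hbdd : IsBoundedUnder (· ≤ ·) l u)
    (h : ∀ ε > 0, ∃ᶠ i in l, u i < ε) : liminf u l = 0 := by
  refine le_antisymm (le_of_forall_pos_le_add fun ε hε => ?_)
    (le_liminf_of_le hbdd.isCoboundedUnder_ge (Eventually.of_forall hu₀))
  rw [zero_add]
  exact liminf_le_of_frequently_le ((h ε hε).mono fun _ => le_of_lt)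
    (isBoundedUnder_of ⟨0, hu₀⟩)

theorem stmt12_general {n : ℕ} (hn : 1 ≤ n) {k : ℕ}
    (f : Fin k → (sphere (0 : EuclideanSpace ℝ (Fin (n + 1))) 1) ≃ₜ
                 (sphere (0 : EuclideanSpace ℝ (Fin (n + 1))) 1))
    -- backward minimality
    (hbmin : ∀ x, Dense {y | ∃ w : List (Fin k), w ≠ [] ∧ y = applyInvWord f w x})
    -- a north-south homeomorphism ϕ in the generated semigroup
    (ϕ : (sphere (0 : EuclideanSpace ℝ (Fin (n + 1))) 1) ≃ₜ
         (sphere (0 : EuclideanSpace ℝ (Fin (n + 1))) 1))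
    (hϕmem : ∃ w : List (Fin k), w ≠ [] ∧ ∀ x, ϕ x = applyWord (fun i => ⇑(f i)) w x)
    (p q : sphere (0 : EuclideanSpace ℝ (Fin (n + 1))) 1)
    (huniform : ∀ W : Set (sphere (0 : EuclideanSpace ℝ (Fin (n + 1))) 1),
      IsOpen W → q ∈ W →
      TendstoUniformlyOn (fun ℓ x => (⇑ϕ)^[ℓ] x) (fun _ => p) Filter.atTop Wᶜ)
    -- Bernoulli measure
    (μ : Measure (ℕ → Fin k)) [IsProbabilityMeasure μ]
    (pw : Fin k → ℝ≥0∞) (hpos : ∀ i, 0 < pw i)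
    (hcyl : ∀ (m : ℕ) (w : Fin m → Fin k),
      μ {ω | ∀ i : Fin m, ω i = w i} = ∏ i, pw (w i)) :
    ∀ x y, ∀ᵐ ω ∂μ,
      Filter.atTop.liminf
        (fun i => dist (fIter (fun j => ⇑(f j)) ω x i)
                       (fIter (fun j => ⇑(f j)) ω y i)) = 0 := by
  obtain ⟨w₀, -, hw₀⟩ := hϕmem
  have hrank : 1 < Module.rank ℝ (EuclideanSpace ℝ (Fin (n + 1))) := by
    rw [← Module.finrank_eq_rank, finrank_euclideanSpace_fin]
    exact_mod_cast Nat.lt_succ_of_le hn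
  have hns : ∀ z ≠ q,
      Tendsto (fun m => (applyWord (fun i => ⇑(f i)) w₀)^[m] z) atTop (𝓝 p) := fun z hz => by
    simpa only [← funext hw₀] using
      (huniform {z}ᶜ isOpen_compl_singleton hz.symm).tendsto_at (by simp)
  have hq : Dense (range fun w => applyInvWord f w q) :=
    (hbmin q).mono <| by rintro _ ⟨w, -, rfl⟩; exact ⟨w, rfl⟩
  have hcontract (ε : ℝ) (hε : 0 < ε) := exists_uniform_length_dist_applyWord_lt
    (fun i => (f i).continuous) (exists_dist_applyWord_lt f hq (sphere_exists_ne_ne hrank) hns hε)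
  intro x y
  have hfreq (j : ℕ) : ∀ᵐ ω ∂μ, ∃ᶠ t in atTop,
      dist (fIter (fun j => ⇑(f j)) ω x t) (fIter (fun j => ⇑(f j)) ω y t) < 1 / (j + 1) :=
    have ⟨_, hN⟩ := hcontract _ Nat.one_div_pos_of_nat
    IsBernoulli.ae_frequently_dist_fIter_lt hcyl hpos hN x y
  filter_upwards [ae_all_iff.2 hfreq] with ω hω
  refine liminf_eq_zero_of_frequently_lt (fun _ => dist_nonneg)
    (isBoundedUnder_of ⟨diam univ, fun _ => dist_le_diam_of_mem isCompact_univ.isBounded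
      (mem_univ _) (mem_univ _)⟩) fun ε hε => ?_
  obtain ⟨j, hj⟩ := exists_nat_one_div_lt hε
  exact (hω j).mono fun _ h => h.trans hj

theorem stmt12 {n : ℕ} (hn : 1 ≤ n) {k : ℕ}
    (f : Fin k → (sphere (0 : EuclideanSpace ℝ (Fin (n + 1))) 1) ≃ₜ
                 (sphere (0 : EuclideanSpace ℝ (Fin (n + 1))) 1))
    -- backward minimality
    (hbmin : ∀ x, Dense {y | ∃ w : List (Fin k), w ≠ [] ∧ y = applyInvWord f w x})
    -- a north-south homeomorphism ϕ in the generated semigroup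
    (ϕ : (sphere (0 : EuclideanSpace ℝ (Fin (n + 1))) 1) ≃ₜ
         (sphere (0 : EuclideanSpace ℝ (Fin (n + 1))) 1))
    (hϕmem : ∃ w : List (Fin k), w ≠ [] ∧ ∀ x, ϕ x = applyWord (fun i => ⇑(f i)) w x)
    (p q : sphere (0 : EuclideanSpace ℝ (Fin (n + 1))) 1) (hpq : p ≠ q)
    (hp : ϕ p = p) (hq : ϕ q = q)
    (hfix : ∀ x, ϕ x = x → x = p ∨ x = q)
    (huniform : ∀ W : Set (sphere (0 : EuclideanSpace ℝ (Fin (n + 1))) 1),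
      IsOpen W → q ∈ W →
      TendstoUniformlyOn (fun ℓ x => (⇑ϕ)^[ℓ] x) (fun _ => p) Filter.atTop Wᶜ)
    -- Bernoulli measure
    (μ : Measure (ℕ → Fin k)) [IsProbabilityMeasure μ]
    (pw : Fin k → ℝ≥0∞) (hpos : ∀ i, 0 < pw i) (hsum : ∑ i, pw i = 1)
    (hcyl : ∀ (m : ℕ) (w : Fin m → Fin k),
      μ {ω | ∀ i : Fin m, ω i = w i} = ∏ i, pw (w i)) :
    ∀ x y, ∀ᵐ ω ∂μ,
      Filter.atTop.liminf
        (fun i => dist (fIter (fun j => ⇑(f j)) ω x i)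
                       (fIter (fun j => ⇑(f j)) ω y i)) = 0 :=
  stmt12_general hn f hbmin ϕ hϕmem p q huniform μ pw hpos hcyl
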